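/- The split operation of the LDCF preserves the multiset of stored fingerprints (up to removing the routing bit): the multiset of fingerprints in sub-filter L equals the disjoint union of the multisets in sub-filter_0 and sub-filter_1 after splitting, with each fingerprint's first bit consumed and recoverable from which child it lies in. -/

import Mathlib

theorem List.cons_headI_tail {α : Type*} [Inhabited α] {l : List α} (h : l ≠ []) :
    l.headI :: l.tail = l := by
  cases l with
  | nil => exact absurd rfl h
  | cons a t => rfl

theorem Multiset.map_cons_tail_filter_headI_eq {α : Type*} [Inhabited α] [DecidableEq α]
    (M : Multiset (List α)) (hne : ∀ l ∈ M, l ≠ []) (a : α) :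
    ((M.filter fun l => l.headI = a).map List.tail).map (List.cons a) =
      M.filter fun l => l.headI = a := by
  rw [Multiset.map_map]
  refine (Multiset.map_congr rfl fun l hl => ?_).trans (Multiset.map_id _)
  obtain ⟨hlM, rfl⟩ := Multiset.mem_filter.mp hl
  exact List.cons_headI_tail (hne l hlM)

/-- The LDCF split preserves the multiset of stored fingerprints: prepending the
routing bit to the tails stored in the two children reconstructs the original
multiset of fingerprints. -/
theorem ldcf_split_preserves_multiset (M : Multiset (List Bool))
    (hne : ∀ l ∈ M, l ≠ []) :
    ((M.filter fun l => l.headI = false).map List.tail).map (List.cons false) +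
      ((M.filter fun l => l.headI = true).map List.tail).map (List.cons true) = M := by
  rw [Multiset.map_cons_tail_filter_headI_eq M hne, Multiset.map_cons_tail_filter_headI_eq M hne]
  simpa only [Bool.not_eq_false] using Multiset.filter_add_not (fun l => l.headI = false) M
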